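/- arXiv:1502.05172 — 6 statements merged into one kernel-verified Lean document; each statement's English description precedes it below -/
import Mathlib

section
/- Let 𝒳 be a class of left R-modules containing all injective modules. A left R-module M is 𝒳-injective if and only if M is the kernel of an 𝒳-precover f : A → B with A an injective module. -/
open CategoryTheory Limits Opposite

/-- `Ext^n_R(X, M) = 0`, phrased via the `Ext` bifunctor on `ModuleCat R`. -/
def extZero (R : Type) [Ring R] (n : ℕ) (X M : ModuleCat R) : Prop :=
  IsZero (((Ext ℤ (ModuleCat R) n).obj (op X)).obj M)

/-- `M` is `𝒳`-injective if `Ext¹(X, M) = 0` for every `X ∈ 𝒳`. -/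
def IsXInjective (R : Type) [Ring R] (𝒳 : ModuleCat R → Prop) (M : ModuleCat R) : Prop :=
  ∀ X, 𝒳 X → extZero R 1 X M

/-!
If `0 → M → A → B → 0` is exact with `A` injective, then `Ext¹(X, A) = 0`, so the long exact
sequence identifies `Ext¹(X, M)` with the cokernel of `Hom(X, A) → Hom(X, B)`: thus `M` is
`𝒳`-injective iff `A → B` is an `𝒳`-precover. For the forward direction embed `M` into an injective
`A` and take `B = A / M`; for the converse replace `f : A → B` by `A ↠ im f`, which is still an
`𝒳`-precover with kernel `ker f`. The connecting map is computed by hand on a projective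
resolution of `X`, where `Ext¹` is `1`-cocycles modulo coboundaries.
-/

namespace CategoryTheory

variable {C : Type*} [Category C] [Abelian C]

theorem ProjectiveResolution.isZero_ext_one_iff (R : Type*) [Ring R] [Linear R C]
    [EnoughProjectives C] {X : C} (P : ProjectiveResolution X) (Y : C) :
    IsZero (((Ext R C 1).obj (Opposite.op X)).obj Y) ↔
      ∀ φ : P.complex.X 1 ⟶ Y, P.complex.d 2 1 ≫ φ = 0 →
        ∃ ψ : P.complex.X 0 ⟶ Y, P.complex.d 1 0 ≫ ψ = φ := by
  rw [(P.isoExt 1 Y).isZero_iff, ← HomologicalComplex.exactAt_iff_isZero_homology,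
    HomologicalComplex.exactAt_iff' _ 0 1 2 (by simp) (by simp),
    ShortComplex.moduleCat_exact_iff]
  rfl

variable [EnoughProjectives C]

theorem ShortComplex.Exact.exists_lift_of_isZero_ext_one {S : ShortComplex C} (hS : S.Exact)
    [Mono S.f] [Epi S.g] {X : C} (hX : IsZero (((Ext ℤ C 1).obj (Opposite.op X)).obj S.X₁))
    (g : X ⟶ S.X₃) : ∃ h : X ⟶ S.X₂, h ≫ S.g = g := by
  let P : ProjectiveResolution X := ProjectiveResolution.of X
  -- `P.π.f 0` lands in `((single₀ C).obj X).X 0`, which is `X` only up to unfolding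
  let π : P.complex.X 0 ⟶ X := P.π.f 0
  have hπ : P.complex.d 1 0 ≫ π = 0 := P.complex_d_comp_π_f_zero
  obtain ⟨u, hu⟩ : ∃ u : P.complex.X 0 ⟶ S.X₂, u ≫ S.g = π ≫ g :=
    ⟨Projective.factorThru _ S.g, Projective.factorThru_comp _ _⟩
  let φ := hS.lift (P.complex.d 1 0 ≫ u) (by simp [hu, reassoc_of% hπ])
  obtain ⟨ψ, hψ⟩ := (P.isZero_ext_one_iff ℤ S.X₁).1 hX φ (by
    rw [← cancel_mono S.f]; simp [φ])
  obtain ⟨h, hh⟩ : ∃ h : X ⟶ S.X₂, π ≫ h = u - ψ ≫ S.f :=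
    P.exact₀.desc' _ (by simp [φ, reassoc_of% hψ])
  have : Epi π := inferInstanceAs (Epi (P.π.f 0))
  refine ⟨h, (cancel_epi π).1 ?_⟩
  simp [reassoc_of% hh, hu]

theorem ShortComplex.Exact.isZero_ext_one_of_forall_exists_lift {S : ShortComplex C}
    (hS : S.Exact) [Mono S.f] [Injective S.X₂] {X : C}
    (hlift : ∀ g : X ⟶ S.X₃, ∃ h : X ⟶ S.X₂, h ≫ S.g = g) :
    IsZero (((Ext ℤ C 1).obj (Opposite.op X)).obj S.X₁) := by
  let P : ProjectiveResolution X := ProjectiveResolution.of X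
  let π : P.complex.X 0 ⟶ X := P.π.f 0
  have hπ : P.complex.d 1 0 ≫ π = 0 := P.complex_d_comp_π_f_zero
  refine (P.isZero_ext_one_iff ℤ S.X₁).2 fun φ hφ => ?_
  obtain ⟨w, hw⟩ : ∃ w : P.complex.X 0 ⟶ S.X₂, P.complex.d 1 0 ≫ w = φ ≫ S.f :=
    ⟨_, (P.exact_succ 0).comp_descToInjective (φ ≫ S.f) (by simp [reassoc_of% hφ])⟩
  obtain ⟨g, hg⟩ : ∃ g : X ⟶ S.X₃, π ≫ g = w ≫ S.g :=
    P.exact₀.desc' _ (by simp [reassoc_of% hw])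
  obtain ⟨h, rfl⟩ := hlift g
  obtain ⟨ψ, hψ⟩ := hS.lift' (w - π ≫ h) (by simp [hg])
  refine ⟨ψ, ?_⟩
  rw [← cancel_mono S.f]
  simp [hψ, hw, reassoc_of% hπ]

end CategoryTheory

/-- Let `𝒳` contain all injective modules. Then `M` is `𝒳`-injective iff `M` is the kernel
of an `𝒳`-precover `f : A → B` with `A` injective. -/
theorem stmt1 (R : Type) [Ring R] (𝒳 : ModuleCat R → Prop)
    (h𝒳 : ∀ E : ModuleCat R, Injective E → 𝒳 E) (M : ModuleCat R) :
    IsXInjective R 𝒳 M ↔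
      ∃ (A B : ModuleCat R) (f : A ⟶ B), Injective A ∧ 𝒳 A ∧
        (∀ C' : ModuleCat R, 𝒳 C' → ∀ g : C' ⟶ B, ∃ h : C' ⟶ A, h ≫ f = g) ∧
        Nonempty (M ≅ kernel f) := by
  constructor
  · intro hM
    let S := ShortComplex.mk (Injective.ι M) (cokernel.π _) (cokernel.condition _)
    have hS : S.Exact := S.exact_of_g_is_cokernel (cokernelIsCokernel _)
    refine ⟨_, _, S.g, inferInstance, h𝒳 _ inferInstance,
      fun X hX => hS.exists_lift_of_isZero_ext_one (hM X hX),
      ⟨hS.fIsKernel.conePointUniqueUpToIso (limit.isLimit _)⟩⟩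
  · rintro ⟨A, B, f, hA, -, hprecover, ⟨e⟩⟩ X hX
    let S := ShortComplex.mk (kernel.ι f) (factorThruImage f)
      (by rw [← cancel_mono (image.ι f)]; simp)
    have hS : S.Exact :=
      S.exact_of_f_is_kernel (isKernelOfComp _ _ (kernelIsKernel f) S.zero (image.fac f))
    refine (hS.isZero_ext_one_of_forall_exists_lift fun g => ?_).of_iso
      (((Ext ℤ _ 1).obj _).mapIso e)
    obtain ⟨h, hh⟩ := hprecover X hX (g ≫ image.ι f)
    exact ⟨h, by rw [← cancel_mono (image.ι f)]; simpa [S] using hh⟩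
end

section
/- Let R be a commutative Noetherian ring and let 𝒳 = { R/𝔭 : 𝔭 ∈ Spec R }. Define 𝒰 = { G : Ext^2_R(R/𝔭, G) = 0 for all 𝔭 ∈ Spec R }. Then every ideal I of R satisfies Ext^1_R(I, G) = 0 for all G ∈ 𝒰 (i.e., R is 𝒰-hereditary). -/
/-!
Embed `G` into an injective module `E` with cokernel `C`. Dimension shifting along
`0 → G → E → C → 0` and along `0 → 𝔭 → R → R/𝔭 → 0` turns `Ext²(R/𝔭, G) = 0` into the
statement that every linear map `𝔭 → C` extends to `R`. For a fixed `C`, "every map `J → C`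
extends to `R`" is an Oka predicate on ideals `J`, so over a Noetherian ring it holds for all
ideals as soon as it holds for the primes (this is Baer's criterion: `C` is injective).
Shifting back along `0 → G → E → C → 0` then gives `Ext¹(I, G) = 0`.
-/

open CategoryTheory Limits Opposite

open Function

section Ring

variable {R K F N M G E C : Type*} [Ring R] [AddCommGroup K] [Module R K] [AddCommGroup F]
  [Module R F] [AddCommGroup N] [Module R N] [AddCommGroup M] [Module R M] [AddCommGroup G]
  [Module R G] [AddCommGroup E] [Module R E] [AddCommGroup C] [Module R C]

theorem LinearMap.exists_comp_eq_of_ker_le {ρ : F →ₗ[R] N} (hρ : Surjective ρ)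
    {h : F →ₗ[R] M} (hker : ker ρ ≤ ker h) : ∃ g : N →ₗ[R] M, g ∘ₗ ρ = h :=
  ⟨(ker ρ).liftQ h hker ∘ₗ (ρ.quotKerEquivOfSurjective hρ).symm.toLinearMap, by
    ext x
    simp⟩

theorem Function.Exact.exists_comp_eq_of_comp_eq_zero {ι : G →ₗ[R] E} {q : E →ₗ[R] C}
    (hex : Exact ι q) (hι : Injective ι) {v : K →ₗ[R] E} (hv : q ∘ₗ v = 0) :
    ∃ u : K →ₗ[R] G, ι ∘ₗ u = v := by
  have hrange : ∀ x, v x ∈ LinearMap.range ι := fun x ↦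
    hex.linearMap_ker_eq ▸ LinearMap.congr_fun hv x
  refine ⟨(LinearEquiv.ofInjective ι hι).symm.toLinearMap ∘ₗ v.codRestrict _ hrange, ?_⟩
  ext x
  simp

end Ring

namespace LinearMap

variable {R A B F M : Type*} [CommRing R] [AddCommGroup A] [Module R A] [AddCommGroup B]
  [Module R B] [AddCommGroup F] [Module R F] [AddCommGroup M] [Module R M]

theorem surjective_lcomp_range_subtype_iff {v : A →ₗ[R] B} {d : B →ₗ[R] F} (hex : Exact v d) :
    Surjective ((range d).subtype.lcomp R M) ↔
      ∀ φ : B →ₗ[R] M, φ ∘ₗ v = 0 → ∃ ψ : F →ₗ[R] M, ψ ∘ₗ d = φ := by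
  have hd : (range d).subtype ∘ₗ d.rangeRestrict = d := rfl
  constructor
  · intro h φ hφ
    obtain ⟨g, hg⟩ := exists_comp_eq_of_ker_le d.surjective_rangeRestrict (h := φ) <| by
      rw [ker_rangeRestrict, hex.linearMap_ker_eq, range_le_ker_iff, hφ]
    obtain ⟨ψ, rfl⟩ := h g
    exact ⟨ψ, by rw [← hg, ← hd]; rfl⟩
  · intro h g
    have hdv : d.rangeRestrict ∘ₗ v = 0 := by
      rw [← cancel_left (range d).injective_subtype, ← comp_assoc, hd,
        hex.linearMap_comp_eq_zero, comp_zero]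
    obtain ⟨ψ, hψ⟩ := h (g ∘ₗ d.rangeRestrict) (by rw [comp_assoc, hdv, comp_zero])
    refine ⟨ψ, ?_⟩
    rw [lcomp_apply', ← cancel_right d.surjective_rangeRestrict, comp_assoc, hd, hψ]

/-- For a projective presentation `π : F ↠ X`, surjectivity of restriction from `F` to `ker π`
is `Ext¹(X, M) = 0`, so it cannot depend on the presentation. -/
theorem surjective_lcomp_ker_subtype_of_projective {X F' : Type*} [AddCommGroup X] [Module R X]
    [AddCommGroup F'] [Module R F'] [Module.Projective R F] [Module.Projective R F']
    {π : F →ₗ[R] X} {π' : F' →ₗ[R] X} (hπ : Surjective π) (hπ' : Surjective π')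
    (h : Surjective ((ker π).subtype.lcomp R M)) : Surjective ((ker π').subtype.lcomp R M) := by
  obtain ⟨α, hα⟩ := Module.projective_lifting_property π π' hπ
  obtain ⟨β, hβ⟩ := Module.projective_lifting_property π' π hπ'
  have hβker : ∀ x ∈ ker π, β x ∈ ker π' := fun x hx ↦ by simpa [← hβ] using hx
  have hdiff : ∀ x, x - β (α x) ∈ ker π' := fun x ↦ by
    simp [← comp_apply π' β, hβ, ← comp_apply π α, hα]
  intro φ
  obtain ⟨ψ, hψ⟩ := h (φ ∘ₗ β.restrict hβker)
  refine ⟨φ ∘ₗ (id - β ∘ₗ α).codRestrict _ hdiff + ψ ∘ₗ α, ?_⟩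
  ext ⟨x, hx⟩
  have hαx : α x ∈ ker π := by simpa [← hα] using hx
  have hψx : ψ (α x) = φ ⟨β (α x), hβker _ hαx⟩ := LinearMap.congr_fun hψ ⟨α x, hαx⟩
  simp only [lcomp_apply, add_apply, comp_apply, Submodule.subtype_apply, hψx, ← map_add]
  congr 1
  ext
  simp

end LinearMap

section DimensionShift

universe u

variable {R : Type u} [CommRing R] {F F₀ G C : Type*} [AddCommGroup F] [Module R F]
  [AddCommGroup F₀] [Module R F₀] [AddCommGroup G] [Module R G] [AddCommGroup C] [Module R C]

/- Given `0 → G → E → C → 0` with `E` injective and `0 → ker ρ → F → N → 0` with `N ≤ F₀`,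
the two surjectivity statements below are `Ext¹(N, G) = 0` (for `F` projective) and
`Ext¹(F₀ ⧸ N, C) = 0` (for `F₀` projective); both then say `Ext²(F₀ ⧸ N, G) = 0`. -/
variable {E : Type u} [AddCommGroup E] [Module R E] [Module.Injective R E]
  {ι : G →ₗ[R] E} {q : E →ₗ[R] C} (hex : Exact ι q) (hι : Injective ι) (hq : Surjective q)
  {N : Submodule R F₀} {ρ : F →ₗ[R] N} (hρ : Surjective ρ)
include hex hι hq hρ

theorem surjective_lcomp_subtype_of_surjective_lcomp_ker_subtype [Module.Projective R F]
    (h : Surjective ((LinearMap.ker ρ).subtype.lcomp R G)) :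
    Surjective (N.subtype.lcomp R C) := by
  intro φ
  obtain ⟨h₁, hh₁⟩ := Module.projective_lifting_property q (φ ∘ₗ ρ) hq
  obtain ⟨u, hu⟩ := hex.exists_comp_eq_of_comp_eq_zero hι (v := h₁ ∘ₗ (LinearMap.ker ρ).subtype)
    (by rw [← LinearMap.comp_assoc, hh₁, LinearMap.comp_assoc, LinearMap.comp_ker_subtype,
      LinearMap.comp_zero])
  obtain ⟨w, hw⟩ := h u
  obtain ⟨g, hg⟩ := LinearMap.exists_comp_eq_of_ker_le hρ (h := h₁ - ι ∘ₗ w) fun x hx ↦ by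
    have hux := LinearMap.congr_fun hu ⟨x, hx⟩
    have hwx := LinearMap.congr_fun hw ⟨x, hx⟩
    simp only [LinearMap.comp_apply, LinearMap.lcomp_apply, Submodule.subtype_apply] at hux hwx
    simp [← hux, ← hwx]
  obtain ⟨g', hg'⟩ := Module.Injective.extension_property R E N F₀ N.subtype
    N.injective_subtype g
  refine ⟨q ∘ₗ g', ?_⟩
  rw [LinearMap.lcomp_apply', LinearMap.comp_assoc, hg', ← LinearMap.cancel_right hρ,
    LinearMap.comp_assoc, hg, LinearMap.comp_sub, hh₁, ← LinearMap.comp_assoc,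
    hex.linearMap_comp_eq_zero, LinearMap.zero_comp, sub_zero]

theorem surjective_lcomp_ker_subtype_of_surjective_lcomp_subtype [Module.Projective R F₀]
    (h : Surjective (N.subtype.lcomp R C)) :
    Surjective ((LinearMap.ker ρ).subtype.lcomp R G) := by
  intro u
  obtain ⟨h₁, hh₁⟩ := Module.Injective.extension_property R E _ F (LinearMap.ker ρ).subtype
    (LinearMap.ker ρ).injective_subtype (ι ∘ₗ u)
  obtain ⟨g, hg⟩ := LinearMap.exists_comp_eq_of_ker_le hρ (h := q ∘ₗ h₁) fun x hx ↦ by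
    simpa using congr(q ($hh₁ ⟨x, hx⟩)).trans (hex.apply_apply_eq_zero _)
  obtain ⟨g', hg'⟩ := h g
  obtain ⟨H, hH⟩ := Module.projective_lifting_property q g' hq
  obtain ⟨w, hw⟩ := hex.exists_comp_eq_of_comp_eq_zero hι (v := h₁ - H ∘ₗ N.subtype ∘ₗ ρ) (by
    rw [LinearMap.comp_sub, ← hg, ← LinearMap.comp_assoc, ← LinearMap.comp_assoc, hH,
      ← LinearMap.lcomp_apply' (S := R) N.subtype g', hg', sub_self])
  refine ⟨w, ?_⟩
  rw [LinearMap.lcomp_apply', ← LinearMap.cancel_left hι, ← LinearMap.comp_assoc, hw,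
    LinearMap.sub_comp, hh₁, LinearMap.comp_assoc, LinearMap.comp_assoc,
    LinearMap.comp_ker_subtype, LinearMap.comp_zero, LinearMap.comp_zero, sub_zero]

end DimensionShift

namespace Ideal

variable {R : Type*} [CommRing R]

theorem isOka_surjective_lcomp_subtype (C : Type*) [AddCommGroup C] [Module R C] :
    IsOka fun J : Ideal R ↦ Surjective (J.subtype.lcomp R C) where
  top f := ⟨f ∘ₗ Submodule.topEquiv.symm.toLinearMap, by ext; rfl⟩
  oka {J a} hsup hcolon f := by
    have hmul : ∀ r ∈ J.colon (span {a}), r * a ∈ J := fun r ↦ mem_colon_span_singleton.1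
    obtain ⟨H, hH⟩ := hcolon (f ∘ₗ (LinearMap.toSpanSingleton R R a).restrict hmul)
    have hfc : ∀ r (hr : r ∈ J.colon (span {a})), f ⟨r * a, hmul r hr⟩ = r • H 1 := fun r hr ↦ by
      rw [← map_smul, smul_eq_mul, mul_one]
      exact (LinearMap.congr_fun hH ⟨r, hr⟩).symm
    have hmem : ∀ p : J × R, (p.1 : R) + p.2 * a ∈ J ⊔ span {a} := fun p ↦
      add_mem (Submodule.mem_sup_left p.1.2)
        (Submodule.mem_sup_right (mul_mem_left _ _ (mem_span_singleton_self a)))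
    let ρ : J × R →ₗ[R] ↥(J ⊔ span {a}) :=
      (J.subtype.coprod (LinearMap.toSpanSingleton R R a)).codRestrict _ hmem
    have hρ : Surjective ρ := by
      rintro ⟨y, hy⟩
      obtain ⟨x, hx, z, hz, rfl⟩ := Submodule.mem_sup.1 hy
      obtain ⟨r, rfl⟩ := mem_span_singleton'.1 hz
      exact ⟨(⟨x, hx⟩, r), rfl⟩
    -- `H` extends `r ↦ f (r * a)` from the colon ideal, so `f` and `r ↦ r • H 1` agree where
    -- `x + r * a = 0` (which forces `r` into the colon ideal) and glue to `J ⊔ span {a}`.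
    obtain ⟨g, hg⟩ := LinearMap.exists_comp_eq_of_ker_le hρ
      (h := f.coprod (LinearMap.toSpanSingleton R C (H 1))) <| by
      rintro ⟨x, r⟩ hxr
      have hxr : (x : R) + r * a = 0 := congr_arg Subtype.val hxr
      have hr : r * a ∈ J := by rw [eq_neg_of_add_eq_zero_right hxr]; exact neg_mem x.2
      have hx : x + ⟨r * a, hr⟩ = 0 := Subtype.ext hxr
      simp [← hfc r (mem_colon_span_singleton.2 hr), ← map_add, hx]
    obtain ⟨G, hG⟩ := hsup g
    refine ⟨G, LinearMap.ext fun x ↦ ?_⟩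
    have hx : ρ (x, 0) = ⟨x, Submodule.mem_sup_left x.2⟩ := Subtype.ext <| by
      change (x : R) + (0 : R) • a = x
      simp
    calc G x = g (ρ (x, 0)) := by rw [hx, ← hG]; rfl
      _ = f x := by simpa using LinearMap.congr_fun hg (x, 0)

theorem IsOka.forall_of_isNoetherianRing [IsNoetherianRing R] {P : Ideal R → Prop}
    (hP : IsOka P) (hprime : ∀ I : Ideal R, I.IsPrime → P I) (I : Ideal R) : P I :=
  hP.forall_of_forall_prime (fun I hI ↦ exists_maximal_of_wellFoundedGT _ ⟨I, hI⟩) hprime I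

end Ideal

section Ext

variable {R : Type} [CommRing R]

theorem extZero_succ_iff (X M : ModuleCat R) (P : ProjectiveResolution X) (n : ℕ) :
    extZero R (n + 1) X M ↔
      Surjective ((LinearMap.range (P.complex.d (n + 1) n).hom).subtype.lcomp R M) := by
  rw [extZero, (P.isoExt (n + 1) M).isZero_iff, ← HomologicalComplex.exactAt_iff_isZero_homology,
    HomologicalComplex.exactAt_iff' _ n (n + 1) (n + 2) (by simp) (by simp),
    ShortComplex.moduleCat_exact_iff, LinearMap.surjective_lcomp_range_subtype_iff
      ((ShortComplex.ShortExact.moduleCat_exact_iff_function_exact _).1 (P.exact_succ n))]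
  constructor
  · intro h φ hφ
    obtain ⟨ψ, hψ⟩ := h (ModuleCat.ofHom φ) (ModuleCat.hom_ext hφ)
    exact ⟨ψ.hom, congr_arg ModuleCat.Hom.hom hψ⟩
  · intro h φ hφ
    obtain ⟨ψ, hψ⟩ := h φ.hom (congr_arg ModuleCat.Hom.hom hφ)
    exact ⟨ModuleCat.ofHom ψ, ModuleCat.hom_ext hψ⟩

variable {G : ModuleCat R} {E C : Type} [AddCommGroup E] [Module R E] [Module.Injective R E]
  [AddCommGroup C] [Module R C] {ι : G →ₗ[R] E} {q : E →ₗ[R] C}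
  {F₀ : Type} [AddCommGroup F₀] [Module R F₀] [Module.Projective R F₀]

theorem surjective_lcomp_subtype_of_extZero_two (hex : Exact ι q) (hι : Injective ι)
    (hq : Surjective q) {N : Submodule R F₀} (h : extZero R 2 (ModuleCat.of R (F₀ ⧸ N)) G) :
    Surjective (N.subtype.lcomp R C) := by
  let Q := projectiveResolution (ModuleCat.of R (F₀ ⧸ N))
  let ε : Q.complex.X 0 →ₗ[R] F₀ ⧸ N := (Q.π.f 0).hom
  have hε : Surjective ε := (ModuleCat.epi_iff_surjective _).1 inferInstance
  have h₁ := (extZero_succ_iff _ G Q 1).1 h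
  rw [(ShortComplex.moduleCat_exact_iff_range_eq_ker _).1 (Q.exact_succ 0),
    ← LinearMap.ker_rangeRestrict] at h₁
  have h₀ := surjective_lcomp_subtype_of_surjective_lcomp_ker_subtype hex hι hq
    (LinearMap.surjective_rangeRestrict _) h₁
  rw [(ShortComplex.moduleCat_exact_iff_range_eq_ker _).1 Q.exact₀] at h₀
  have h := LinearMap.surjective_lcomp_ker_subtype_of_projective hε N.mkQ_surjective h₀
  rwa [N.ker_mkQ] at h

theorem extZero_one_of_surjective_lcomp_subtype (hex : Exact ι q) (hι : Injective ι)
    (hq : Surjective q) {N : Submodule R F₀} (h : Surjective (N.subtype.lcomp R C)) :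
    extZero R 1 (ModuleCat.of R N) G := by
  let P := projectiveResolution (ModuleCat.of R N)
  have hε : Surjective (P.π.f 0).hom := (ModuleCat.epi_iff_surjective _).1 inferInstance
  have h₀ := surjective_lcomp_ker_subtype_of_surjective_lcomp_subtype hex hι hq hε h
  rw [extZero_succ_iff _ G P 0, (ShortComplex.moduleCat_exact_iff_range_eq_ker _).1 P.exact₀]
  exact h₀

end Ext

/-- Over a commutative Noetherian ring, with `𝒰 = {G : Ext²(R/𝔭, G) = 0 for all primes 𝔭}`,
every ideal `I` satisfies `Ext¹(I, G) = 0` for all `G ∈ 𝒰`, i.e. `R` is `𝒰`-hereditary. -/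
theorem stmt5 (R : Type) [CommRing R] [IsNoetherianRing R]
    (𝒰 : ModuleCat R → Prop)
    (h𝒰 : ∀ G, 𝒰 G ↔ ∀ 𝔭 : Ideal R, 𝔭.IsPrime → extZero R 2 (ModuleCat.of R (R ⧸ 𝔭)) G)
    (I : Ideal R) :
    ∀ G, 𝒰 G → extZero R 1 (ModuleCat.of R (↥I)) G := by
  intro G hG
  let E := Injective.under G
  have : Module.Injective R E :=
    Module.injective_module_of_injective_object R E (inj := (inferInstance : Injective E))
  let ι := (Injective.ι G).hom
  have hι : Injective ι := (ModuleCat.mono_iff_injective _).1 inferInstance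
  have hex := LinearMap.exact_map_mkQ_range ι
  have hq := (LinearMap.range ι).mkQ_surjective
  have hbaer : ∀ J : Ideal R, Surjective (J.subtype.lcomp R (E ⧸ LinearMap.range ι)) :=
    (Ideal.isOka_surjective_lcomp_subtype _).forall_of_isNoetherianRing fun 𝔭 h𝔭 ↦
      surjective_lcomp_subtype_of_extZero_two hex hι hq ((h𝒰 G).1 hG 𝔭 h𝔭)
  exact extZero_one_of_surjective_lcomp_subtype hex hι hq (hbaer I)
end

section
/- Let R be a ring and 𝒰_𝒳 the class of 𝒳-injective left R-modules. R is 𝒰_𝒳-hereditary (every left ideal is 𝒰_𝒳-projective) if and only if every submodule of a 𝒰_𝒳-projective R-module is 𝒰_𝒳-projective. -/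
/-!
Embed `U ∈ 𝒰_𝒳` in an injective module `E` and put `Q = E/U`. Then `Ext¹(X, U) = 0` exactly when
every map `X → Q` lifts to `E`. If every left ideal is `𝒰_𝒳`-projective, Baer's criterion makes `Q`
injective; so for `N ≤ M` with `M` `𝒰_𝒳`-projective, a map `N → Q` extends to `M`, lifts to `E`, and
restricts back to `N`. Conversely `R` is projective, and its left ideals are its submodules.
-/

open CategoryTheory Limits Opposite

/-- `M` is `𝒰_𝒳`-projective if `Ext¹(M, U) = 0` for every `𝒳`-injective module `U`. -/
def IsUXProjective (R : Type) [Ring R] (𝒳 : ModuleCat R → Prop) (M : ModuleCat R) : Prop :=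
  ∀ U : ModuleCat R, IsXInjective R 𝒳 U → extZero R 1 M U

namespace CategoryTheory

variable {k : Type*} [Ring k] {C : Type*} [Category C] [Abelian C] [Linear k C]
  [EnoughProjectives C]

lemma ProjectiveResolution.isZero_Ext_one_iff {X : C} (P : ProjectiveResolution X) (U : C) :
    IsZero (((Ext k C 1).obj (Opposite.op X)).obj U) ↔
      ∀ f : P.complex.X 1 ⟶ U, P.complex.d 2 1 ≫ f = 0 →
        ∃ g : P.complex.X 0 ⟶ U, P.complex.d 1 0 ≫ g = f := by
  rw [(P.isoExt 1 U).isZero_iff, ← HomologicalComplex.exactAt_iff_isZero_homology,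
    HomologicalComplex.exactAt_iff' _ 0 1 2 (by simp) (by simp),
    ShortComplex.moduleCat_exact_iff]
  rfl

lemma ShortComplex.ShortExact.isZero_Ext_one_iff_forall_exists_lift {S : ShortComplex C}
    (hS : S.ShortExact) [Injective S.X₂] (X : C) :
    IsZero (((Ext k C 1).obj (Opposite.op X)).obj S.X₁) ↔
      ∀ φ : X ⟶ S.X₃, ∃ ψ : X ⟶ S.X₂, ψ ≫ S.g = φ := by
  have := hS.mono_f
  have := hS.epi_g
  let P := projectiveResolution X
  let π₀ : P.complex.X 0 ⟶ X := P.π.f 0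
  have hπ₀ : P.complex.d 1 0 ≫ π₀ = 0 := P.complex_d_comp_π_f_zero
  have : Epi π₀ := inferInstanceAs (Epi (P.π.f 0))
  have hP₀ : (ShortComplex.mk _ _ hπ₀).Exact := P.exact₀
  have hP₁ : (ShortComplex.mk _ _ (P.complex.d_comp_d 2 1 0)).Exact := P.exact_succ 0
  rw [P.isZero_Ext_one_iff]
  constructor
  · intro hExt φ
    let ψ₀ := Projective.factorThru (π₀ ≫ φ) S.g
    have hψ₀ : ψ₀ ≫ S.g = π₀ ≫ φ := Projective.factorThru_comp _ _
    have hd : (P.complex.d 1 0 ≫ ψ₀) ≫ S.g = 0 := by simp [hψ₀, reassoc_of% hπ₀]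
    have hf := hS.exact.lift_f _ hd
    obtain ⟨g, hg⟩ := hExt (hS.exact.lift _ hd) (by rw [← cancel_mono S.f]; simp [hf])
    have hdesc : P.complex.d 1 0 ≫ (ψ₀ - g ≫ S.f) = 0 := by simp [reassoc_of% hg, hf]
    refine ⟨hP₀.desc _ hdesc, ?_⟩
    rw [← cancel_epi π₀]
    have hπ₀desc : π₀ ≫ hP₀.desc _ hdesc = ψ₀ - g ≫ S.f := hP₀.g_desc _ hdesc
    simp [reassoc_of% hπ₀desc, hψ₀]
  · intro hLift f hf
    let e := hP₁.descToInjective (f ≫ S.f) (by simp [reassoc_of% hf])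
    have he : P.complex.d 1 0 ≫ e = f ≫ S.f := hP₁.comp_descToInjective _ _
    have hφ : P.complex.d 1 0 ≫ e ≫ S.g = 0 := by simp [reassoc_of% he]
    obtain ⟨ψ, hψ⟩ := hLift (hP₀.desc _ hφ)
    have hπ₀desc : π₀ ≫ hP₀.desc _ hφ = e ≫ S.g := hP₀.g_desc _ hφ
    have hlift : (e - π₀ ≫ ψ) ≫ S.g = 0 := by simp [hψ, hπ₀desc]
    refine ⟨hS.exact.lift _ hlift, ?_⟩
    rw [← cancel_mono S.f]
    simp [he, reassoc_of% hπ₀]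

end CategoryTheory

namespace ModuleCat

variable {R : Type} [Ring R]

instance mono_ofHom_subtype {M : Type} [AddCommGroup M] [Module R M] (N : Submodule R M) :
    Mono (ofHom N.subtype) :=
  (mono_iff_injective _).mpr N.injective_subtype

/-- Baer's criterion: a map `I → X₃` lifts to `X₂` since `Ext¹(I, X₁) = 0`, and then extends
to `R` since `X₂` is injective. -/
lemma injective_X₃_of_extZero_ideal {S : ShortComplex (ModuleCat R)} (hS : S.ShortExact)
    [Injective S.X₂] (h : ∀ I : Ideal R, extZero R 1 (of R I) S.X₁) : Injective S.X₃ := by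
  have : Module.Injective R S.X₃ := Module.Baer.injective fun I g => by
    obtain ⟨ψ, hψ⟩ := (hS.isZero_Ext_one_iff_forall_exists_lift _).mp (h I) (ofHom g)
    have hext : ofHom I.subtype ≫ Injective.factorThru ψ (ofHom I.subtype) ≫ S.g = ofHom g := by
      rw [Injective.comp_factorThru_assoc, hψ]
    exact ⟨(Injective.factorThru ψ (ofHom I.subtype) ≫ S.g).hom,
      fun x hx => congr($(hext).hom ⟨x, hx⟩)⟩
  exact Module.injective_object_of_injective_module R S.X₃

end ModuleCat

open ModuleCat in
lemma isUXProjective_submodule {R : Type} [Ring R] {𝒳 : ModuleCat R → Prop}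
    (hI : ∀ I : Ideal R, IsUXProjective R 𝒳 (of R I)) {M : Type} [AddCommGroup M] [Module R M]
    (hM : IsUXProjective R 𝒳 (of R M)) (N : Submodule R M) : IsUXProjective R 𝒳 (of R N) := by
  intro U hU
  let S := ShortComplex.mk _ _ (cokernel.condition (Injective.ι U))
  have hS : S.ShortExact := { exact := ShortComplex.exact_cokernel _ }
  have : Injective S.X₃ := injective_X₃_of_extZero_ideal hS fun I => hI I U hU
  refine (hS.isZero_Ext_one_iff_forall_exists_lift _).mpr fun φ => ?_
  obtain ⟨ψ, hψ⟩ := (hS.isZero_Ext_one_iff_forall_exists_lift _).mp (hM U hU)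
    (Injective.factorThru φ (ofHom N.subtype))
  exact ⟨ofHom N.subtype ≫ ψ, by simp [hψ]⟩

lemma isUXProjective_of_projective {R : Type} [Ring R] (𝒳 : ModuleCat R → Prop) (P : ModuleCat R)
    [Projective P] : IsUXProjective R 𝒳 P :=
  fun U _ => isZero_Ext_succ_of_projective P U 0

/-- `R` is `𝒰_𝒳`-hereditary (every left ideal is `𝒰_𝒳`-projective) iff every submodule of a
`𝒰_𝒳`-projective module is `𝒰_𝒳`-projective. -/
theorem stmt6 (R : Type) [Ring R] (𝒳 : ModuleCat R → Prop) :
    (∀ I : Ideal R, IsUXProjective R 𝒳 (ModuleCat.of R (↥I))) ↔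
      (∀ (M : Type) [AddCommGroup M] [Module R M],
        IsUXProjective R 𝒳 (ModuleCat.of R M) →
          ∀ N : Submodule R M, IsUXProjective R 𝒳 (ModuleCat.of R (↥N))) := by
  refine ⟨fun hI M _ _ hM N => isUXProjective_submodule hI hM N, fun h I => ?_⟩
  have : Projective (ModuleCat.of R R) := (IsProjective.iff_projective (P := R)).mp inferInstance
  exact h R (isUXProjective_of_projective 𝒳 _) I
end

section
/- Let M be a submodule of an 𝒳-injective module L such that the inclusion i : M → L is an 𝒳-injective envelope. If L/M is 𝒰_𝒳-projective, then: there is no direct summand L₁ of L with L₁ ≠ L and M ⊆ L₁; equivalently, for any epimorphism α : L/M → N such that α∘π is a split epimorphism (π : L → L/M canonical), N = 0. -/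
open CategoryTheory Limits Opposite

/-!
If `L = L₁ ⊕ L₂` with `M ⊆ L₁`, the projection of `L` onto `L₁` along `L₂` fixes `M`, so it
is injective, which forces `L₂ = 0`. If `s` splits `β = α ∘ π`, then `s ∘ β` is an idempotent
whose kernel contains `M`; its kernel is therefore all of `L`, so `β = β ∘ s ∘ β = 0` and
`id_N = β ∘ s = 0`.
-/

namespace Submodule

variable {R L : Type*} [Ring R] [AddCommGroup L] [Module R L] {M : Submodule R L}

theorem eq_top_of_isCompl_of_le
    (hmin : ∀ γ : L →ₗ[R] L, γ ∘ₗ M.subtype = M.subtype → Function.Injective γ)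
    {L₁ L₂ : Submodule R L} (hc : IsCompl L₁ L₂) (hM : M ≤ L₁) : L₁ = ⊤ := by
  have hfix : L₁.projection L₂ hc ∘ₗ M.subtype = M.subtype :=
    LinearMap.ext fun m => projection_apply_of_mem_left hc (hM m.2)
  have hL₂ : L₂ = ⊥ := by
    rw [← ker_projection hc]
    exact LinearMap.ker_eq_bot.mpr (hmin _ hfix)
  exact eq_top_of_isCompl_bot (hL₂ ▸ hc)

theorem subsingleton_of_comp_eq_id_of_le_ker
    (hmin : ∀ γ : L →ₗ[R] L, γ ∘ₗ M.subtype = M.subtype → Function.Injective γ)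
    {N : Type*} [AddCommGroup N] [Module R N] {β : L →ₗ[R] N} (hβ : M ≤ LinearMap.ker β)
    {s : N →ₗ[R] L} (hs : β ∘ₗ s = LinearMap.id) : Subsingleton N := by
  have hidem : IsIdempotentElem (s ∘ₗ β) := by
    rw [IsIdempotentElem, Module.End.mul_eq_comp, LinearMap.comp_assoc,
      ← LinearMap.comp_assoc β, hs, LinearMap.id_comp]
  have hker : LinearMap.ker (s ∘ₗ β) = ⊤ :=
    eq_top_of_isCompl_of_le hmin (LinearMap.IsIdempotentElem.isCompl hidem).symm
      (hβ.trans (LinearMap.ker_le_ker_comp β s))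
  have hβ0 : β = 0 := by
    rw [← LinearMap.id_comp β, ← hs, LinearMap.comp_assoc, LinearMap.ker_eq_top.mp hker,
      LinearMap.comp_zero]
  refine subsingleton_of_forall_eq 0 fun n => ?_
  simpa [hβ0] using (LinearMap.congr_fun hs n).symm

end Submodule

theorem stmt13_general (R : Type) [Ring R]
    (L : Type) [AddCommGroup L] [Module R L] (M : Submodule R L)
    (hmin : ∀ γ : L →ₗ[R] L, γ.comp M.subtype = M.subtype → Function.Bijective γ) :
    (∀ L₁ L₂ : Submodule R L, IsCompl L₁ L₂ → M ≤ L₁ → L₁ = ⊤) ∧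
    (∀ (N : Type) [AddCommGroup N] [Module R N] (α : (L ⧸ M) →ₗ[R] N),
      Function.Surjective α →
        (∃ s : N →ₗ[R] L, (α.comp M.mkQ).comp s = LinearMap.id) → Subsingleton N) := by
  have hinj : ∀ γ : L →ₗ[R] L, γ ∘ₗ M.subtype = M.subtype → Function.Injective γ :=
    fun γ hγ => (hmin γ hγ).1
  refine ⟨fun _ _ hc hM => Submodule.eq_top_of_isCompl_of_le hinj hc hM, ?_⟩
  rintro N _ _ α - ⟨s, hs⟩
  have hM : M ≤ LinearMap.ker (α ∘ₗ M.mkQ) := fun m hm => by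
    simp [(Submodule.Quotient.mk_eq_zero M).2 hm]
  exact Submodule.subsingleton_of_comp_eq_id_of_le_ker hinj hM hs

/-- Let `M` be a submodule of an `𝒳`-injective module `L` such that the inclusion `M → L`
is an `𝒳`-injective envelope and `L/M` is `𝒰_𝒳`-projective.  Then `L` has no proper direct
summand containing `M`, and every epimorphism `α : L/M → N` such that `α ∘ π` splits has
`N = 0`. -/
theorem stmt13 (R : Type) [Ring R] (𝒳 : ModuleCat R → Prop)
    (L : Type) [AddCommGroup L] [Module R L] (M : Submodule R L)
    (hL : IsXInjective R 𝒳 (ModuleCat.of R L))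
    (hfac : ∀ (L' : Type) [AddCommGroup L'] [Module R L'],
      IsXInjective R 𝒳 (ModuleCat.of R L') → ∀ f : (↥M) →ₗ[R] L',
        ∃ g : L →ₗ[R] L', g.comp M.subtype = f)
    (hmin : ∀ γ : L →ₗ[R] L, γ.comp M.subtype = M.subtype → Function.Bijective γ)
    (hproj : IsUXProjective R 𝒳 (ModuleCat.of R (L ⧸ M))) :
    (∀ L₁ L₂ : Submodule R L, IsCompl L₁ L₂ → M ≤ L₁ → L₁ = ⊤) ∧
    (∀ (N : Type) [AddCommGroup N] [Module R N] (α : (L ⧸ M) →ₗ[R] N),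
      Function.Surjective α →
        (∃ s : N →ₗ[R] L, (α.comp M.mkQ).comp s = LinearMap.id) → Subsingleton N) :=
  stmt13_general R L M hmin
end

section
/- Suppose M is a submodule of an 𝒳-injective module L, L/M is 𝒰_𝒳-projective, and every endomorphism γ of L with γ∘i = i (where i : M → L is the inclusion) is a monomorphism. If M admits an 𝒳-injective envelope, then i : M → L is an 𝒳-injective envelope of M. -/
open CategoryTheory Limits Opposite

/-!
A map `f : M → L'` to an `𝒳`-injective module extends along `M ⊆ L` because `Ext¹(L/M, L') = 0`:
for a projective resolution `P₁ → P₀ → L/M` and a lift `q : P₀ → L`, the map `f ∘ q` on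
`K = ker (P₀ → L/M)` is a 1-cocycle, hence extends to `P₀`, and `L` is the pushout of
`P₀ ← K → M`.

Given an envelope `ψ : M → E`, comparison maps `h : E → L` and `k : L → E` over `M` make `k h` an
automorphism of `E`. Then `h (k h)⁻¹ k` is an idempotent endomorphism of `L` fixing `M`; it is
injective by hypothesis, hence the identity, so `k` is an isomorphism over `M` and the minimality
of `ψ` transfers to the inclusion.
-/

universe u v

theorem CategoryTheory.ProjectiveResolution.exists_d_comp_eq_of_isZero_ext {S : Type*} [Ring S]
    {C : Type*} [Category C] [Abelian C] [Linear S C] [EnoughProjectives C] {X Y : C}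
    (P : ProjectiveResolution X) (h : IsZero (((Ext S C 1).obj (op X)).obj Y))
    (φ : P.complex.X 1 ⟶ Y) (hφ : P.complex.d 2 1 ≫ φ = 0) :
    ∃ ψ : P.complex.X 0 ⟶ Y, P.complex.d 1 0 ≫ ψ = φ := by
  have hexact := (HomologicalComplex.exactAt_iff' (P.complex.linearYonedaObj S Y) 0 1 2
    (by simp) (by simp)).1 ((HomologicalComplex.exactAt_iff_isZero_homology _ _).2
      (h.of_iso (P.isoExt 1 Y).symm))
  rw [ShortComplex.moduleCat_exact_iff_ker_sub_range] at hexact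
  exact hexact (x := φ) hφ

theorem CategoryTheory.ProjectiveResolution.exists_comp_ker_subtype_eq_of_isZero_ext
    {R : Type u} [Ring R] [Small.{v} R] {X Y : ModuleCat.{v} R} (P : ProjectiveResolution X)
    (h : IsZero (((Ext ℤ (ModuleCat.{v} R) 1).obj (op X)).obj Y))
    (u : LinearMap.ker (P.π.f 0).hom →ₗ[R] Y) :
    ∃ ψ : P.complex.X 0 →ₗ[R] Y, ψ ∘ₗ (LinearMap.ker (P.π.f 0).hom).subtype = u := by
  let c := (P.complex.d 1 0).hom.codRestrict (LinearMap.ker (P.π.f 0).hom)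
    fun x ↦ LinearMap.mem_ker.2 congr($(P.complex_d_comp_π_f_zero).hom x)
  have hc : Function.Surjective c := fun ⟨k, hk⟩ ↦ by
    obtain ⟨y, hy⟩ := (ShortComplex.moduleCat_exact_iff_ker_sub_range _).1 P.exact₀ hk
    exact ⟨y, Subtype.ext hy⟩
  have hcd (x : P.complex.X 2) : c (P.complex.d 2 1 x) = 0 :=
    Subtype.ext congr($(P.complex.d_comp_d 2 1 0).hom x)
  obtain ⟨ψ, hψ⟩ := P.exists_d_comp_eq_of_isZero_ext h (ModuleCat.ofHom (u ∘ₗ c)) (by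
    ext x
    exact congr(u $(hcd x)).trans u.map_zero)
  refine ⟨ψ.hom, LinearMap.ext fun k ↦ ?_⟩
  obtain ⟨y, rfl⟩ := hc k
  exact congr(($hψ).hom y)

theorem LinearMap.exists_comp_eq_of_surjective_of_ker_le {R : Type*} [Ring R]
    {A B Y : Type*} [AddCommGroup A] [Module R A] [AddCommGroup B] [Module R B]
    [AddCommGroup Y] [Module R Y] {Φ : A →ₗ[R] B} (hΦ : Function.Surjective Φ)
    {Ψ : A →ₗ[R] Y} (h : ker Φ ≤ ker Ψ) : ∃ g : B →ₗ[R] Y, g ∘ₗ Φ = Ψ :=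
  ⟨(ker Φ).liftQ Ψ h ∘ₗ (Φ.quotKerEquivOfSurjective hΦ).symm.toLinearMap, by
    ext x
    simp⟩

theorem Submodule.exists_comp_subtype_eq_of_lift {R : Type*} [Ring R]
    {A P Y : Type*} [AddCommGroup A] [Module R A] [AddCommGroup P] [Module R P]
    [AddCommGroup Y] [Module R Y] (N : Submodule R A) {q : P →ₗ[R] A}
    (hq : Function.Surjective (N.mkQ ∘ₗ q)) (f : N →ₗ[R] Y) {ψ : P →ₗ[R] Y}
    (hψ : ∀ x (n : N), q x = n → ψ x = f n) : ∃ g : A →ₗ[R] Y, g ∘ₗ N.subtype = f := by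
  have hsurj : Function.Surjective (N.subtype.coprod q) := fun a ↦ by
    obtain ⟨y, hy⟩ := hq (N.mkQ a)
    have hmem : a - q y ∈ N := (Submodule.Quotient.eq N).1 hy.symm
    exact ⟨(⟨a - q y, hmem⟩, y), by simp⟩
  have hker : LinearMap.ker (N.subtype.coprod q) ≤ LinearMap.ker (f.coprod ψ) := by
    rintro ⟨n, y⟩ hny
    have hqy : q y = ↑(-n) := by
      rw [Submodule.coe_neg]
      exact eq_neg_of_add_eq_zero_right (by simpa using hny)
    simp [hψ y _ hqy]
  obtain ⟨g, hg⟩ := LinearMap.exists_comp_eq_of_surjective_of_ker_le hsurj hker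
  exact ⟨g, LinearMap.ext fun n ↦ by simpa using congr($hg (n, 0))⟩

theorem Submodule.exists_comp_subtype_eq_of_extZero {R : Type} [Ring R] {A Y : Type}
    [AddCommGroup A] [Module R A] [AddCommGroup Y] [Module R Y] (N : Submodule R A)
    (h : extZero R 1 (ModuleCat.of R (A ⧸ N)) (ModuleCat.of R Y)) (f : N →ₗ[R] Y) :
    ∃ g : A →ₗ[R] Y, g ∘ₗ N.subtype = f := by
  obtain ⟨P⟩ := (inferInstance : HasProjectiveResolution (ModuleCat.of R (A ⧸ N))).out
  let p : ModuleCat.of R A ⟶ ModuleCat.of R (A ⧸ N) := ModuleCat.ofHom N.mkQ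
  have : Epi p := (ModuleCat.epi_iff_surjective _).2 N.mkQ_surjective
  let q := (Projective.factorThru (X := ModuleCat.of R (A ⧸ N)) (P.π.f 0) p).hom
  have hq (x : P.complex.X 0) : N.mkQ (q x) = P.π.f 0 x :=
    congr(($(Projective.factorThru_comp (X := ModuleCat.of R (A ⧸ N)) (P.π.f 0) p)).hom x)
  have hqN (k : LinearMap.ker (P.π.f 0).hom) : q k ∈ N := by
    rw [← Submodule.Quotient.mk_eq_zero, ← N.mkQ_apply, hq]
    exact k.2
  obtain ⟨ψ, hψ⟩ := P.exists_comp_ker_subtype_eq_of_isZero_ext h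
    (f ∘ₗ (q ∘ₗ Submodule.subtype _).codRestrict N hqN)
  have hπ : Function.Surjective (P.π.f 0).hom := (ModuleCat.epi_iff_surjective _).1 inferInstance
  refine N.exists_comp_subtype_eq_of_lift (fun a ↦ (hπ a).imp fun y ↦ (hq y).trans) f (ψ := ψ)
    fun x n hxn ↦ ?_
  have hx : x ∈ LinearMap.ker (P.π.f 0).hom := by
    rw [LinearMap.mem_ker, ← hq, hxn]
    exact (Submodule.Quotient.mk_eq_zero N).2 n.2
  exact congr($hψ ⟨x, hx⟩).trans congr(f $(Subtype.ext hxn))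

section Envelope

variable {R : Type*} [Ring R] {M L E : Type*} [AddCommGroup M] [Module R M]
  [AddCommGroup L] [Module R L] [AddCommGroup E] [Module R E]

theorem LinearMap.bijective_of_comp_eq_of_comp_eq {i : M →ₗ[R] L} {ψ : M →ₗ[R] E}
    {h : E →ₗ[R] L} {k : L →ₗ[R] E} (hh : h ∘ₗ ψ = i) (hk : k ∘ₗ i = ψ)
    (hψ : ∀ g : E →ₗ[R] E, g ∘ₗ ψ = ψ → Function.Bijective g)
    (hi : ∀ γ : L →ₗ[R] L, γ ∘ₗ i = i → Function.Injective γ) : Function.Bijective k := by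
  have hkhψ : (k ∘ₗ h) ∘ₗ ψ = ψ := by rw [comp_assoc, hh, hk]
  have hkh : Function.Bijective (k ∘ₗ h) := hψ _ hkhψ
  let φ := LinearEquiv.ofBijective _ hkh
  let e := h ∘ₗ φ.symm.toLinearMap ∘ₗ k
  have he_i : e ∘ₗ i = i := by
    ext m
    have hφψ : φ.symm (ψ m) = ψ m := φ.symm_apply_eq.2 (LinearMap.congr_fun hkhψ m).symm
    change h (φ.symm (k (i m))) = i m
    rw [← comp_apply k i, hk, hφψ, ← comp_apply h ψ, hh]
  have he (x : L) : e x = x := hi e he_i <| by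
    simp only [e, coe_comp, LinearEquiv.coe_coe, Function.comp_apply]
    congr 1
    exact φ.symm_apply_apply _
  refine ⟨Function.Injective.of_comp (f := h ∘ φ.symm) fun a b hab ↦ ?_, fun y ↦ ?_⟩
  · rwa [← he a, ← he b]
  · obtain ⟨x, hx⟩ := hkh.2 y
    exact ⟨h x, hx⟩

theorem LinearEquiv.bijective_of_comp_eq_self (e : L ≃ₗ[R] E) {i : M →ₗ[R] L} {ψ : M →ₗ[R] E}
    (he : e.toLinearMap ∘ₗ i = ψ) (hψ : ∀ g : E →ₗ[R] E, g ∘ₗ ψ = ψ → Function.Bijective g)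
    {γ : L →ₗ[R] L} (hγ : γ ∘ₗ i = i) : Function.Bijective γ := by
  let g : E →ₗ[R] E := e.toLinearMap ∘ₗ γ ∘ₗ e.symm.toLinearMap
  have hconj : Function.Bijective g := hψ g <| by
    ext m
    simpa [g, ← he] using congr(e $(LinearMap.congr_fun hγ m))
  have hγ_eq : ⇑γ = e.symm ∘ g ∘ e := by
    ext x
    simp [g]
  rw [hγ_eq]
  exact e.symm.bijective.comp (hconj.comp e.bijective)

end Envelope

/-- Suppose `M ⊆ L` with `L` `𝒳`-injective, `L/M` `𝒰_𝒳`-projective, and every endomorphism of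
`L` fixing `M` pointwise is injective.  If `M` admits an `𝒳`-injective envelope, then the
inclusion `M → L` is an `𝒳`-injective envelope of `M`. -/
theorem stmt14 (R : Type) [Ring R] (𝒳 : ModuleCat R → Prop)
    (L : Type) [AddCommGroup L] [Module R L] (M : Submodule R L)
    (hL : IsXInjective R 𝒳 (ModuleCat.of R L))
    (hproj : IsUXProjective R 𝒳 (ModuleCat.of R (L ⧸ M)))
    (hmono : ∀ γ : L →ₗ[R] L, γ.comp M.subtype = M.subtype → Function.Injective γ)
    (henv : ∃ (E : Type) (_ : AddCommGroup E) (_ : Module R E) (ψ : (↥M) →ₗ[R] E),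
      IsXInjective R 𝒳 (ModuleCat.of R E) ∧
      (∀ (L' : Type) [AddCommGroup L'] [Module R L'],
        IsXInjective R 𝒳 (ModuleCat.of R L') → ∀ f : (↥M) →ₗ[R] L',
          ∃ g : E →ₗ[R] L', g.comp ψ = f) ∧
      (∀ g : E →ₗ[R] E, g.comp ψ = ψ → Function.Bijective g)) :
    (∀ (L' : Type) [AddCommGroup L'] [Module R L'],
      IsXInjective R 𝒳 (ModuleCat.of R L') → ∀ f : (↥M) →ₗ[R] L',
        ∃ g : L →ₗ[R] L', g.comp M.subtype = f) ∧
    (∀ γ : L →ₗ[R] L, γ.comp M.subtype = M.subtype → Function.Bijective γ) := by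
  have hext : ∀ (L' : Type) [AddCommGroup L'] [Module R L'],
      IsXInjective R 𝒳 (ModuleCat.of R L') → ∀ f : (↥M) →ₗ[R] L',
        ∃ g : L →ₗ[R] L', g.comp M.subtype = f :=
    fun L' _ _ hL' ↦ M.exists_comp_subtype_eq_of_extZero (hproj _ hL')
  refine ⟨hext, fun γ hγ ↦ ?_⟩
  obtain ⟨E, _, _, ψ, hE, hψ_ext, hψ_min⟩ := henv
  obtain ⟨h, hh⟩ := hψ_ext L hL M.subtype
  obtain ⟨k, hk⟩ := hext E hE ψ
  have hk_bij := LinearMap.bijective_of_comp_eq_of_comp_eq hh hk hψ_min hmono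
  exact (LinearEquiv.ofBijective k hk_bij).bijective_of_comp_eq_self hk hψ_min hγ
end

section
/- Let 𝒳 be the class of pure projective left R-modules. Then the class of 𝒳-injective modules is closed under pure submodules: if A is a pure submodule of an 𝒳-injective module M, then A is 𝒳-injective. -/
open CategoryTheory Limits Opposite

/-- `g : B → C` is a pure epimorphism: it is surjective and every map from a finitely
presented module into `C` lifts along `g`. -/
def IsPureEpi (R : Type) [Ring R] {B C : Type} [AddCommGroup B] [Module R B]
    [AddCommGroup C] [Module R C] (g : B →ₗ[R] C) : Prop :=
  Function.Surjective g ∧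
    ∀ (F : Type) [AddCommGroup F] [Module R F], Module.FinitePresentation R F →
      ∀ f : F →ₗ[R] C, ∃ h : F →ₗ[R] B, g.comp h = f

/-- `X` is pure projective: projective with respect to all pure exact sequences. -/
def PureProjective (R : Type) [Ring R] (X : Type) [AddCommGroup X] [Module R X] : Prop :=
  ∀ (B C : Type) [AddCommGroup B] [Module R B] [AddCommGroup C] [Module R C]
    (g : B →ₗ[R] C), IsPureEpi R g → ∀ f : X →ₗ[R] C, ∃ h : X →ₗ[R] B, g.comp h = f

/-- `M` is `𝒳`-injective for `𝒳` the class of pure projective modules. -/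
def PPInjective (R : Type) [Ring R] (M : ModuleCat R) : Prop :=
  ∀ X : ModuleCat R, PureProjective R (↥X) → extZero R 1 X M

/-!
Compute `Ext¹(X, -)` from a projective resolution `P₂ → P₁ → P₀ → X`: it vanishes on `N` iff
every map `P₁ → N` killed by `P₂ → P₁` extends along `d : P₁ → P₀`. Given such a map `f` into `A`,
extend `f` followed by `A ↪ M` to `v : P₀ → M`. Modulo `A`, `v` vanishes on the image of `d`, so it
descends to `X = coker d → M/A`; pure projectivity of `X` lifts this to `k : X → M`. Then
`v - k ∘ π` takes values in `A` and still extends `f`, because `π ∘ d = 0`.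
-/

theorem extZero_one_iff {R : Type} [Ring R] {X : ModuleCat R} (P : ProjectiveResolution X)
    (N : ModuleCat R) :
    extZero R 1 X N ↔ ∀ u : P.complex.X 1 ⟶ N, P.complex.d 2 1 ≫ u = 0 →
      ∃ v : P.complex.X 0 ⟶ N, P.complex.d 1 0 ≫ v = u := by
  rw [extZero, Iso.isZero_iff (P.isoExt 1 N), ← HomologicalComplex.exactAt_iff_isZero_homology,
    HomologicalComplex.exactAt_iff' _ 0 1 2 (by simp) (by simp),
    ShortComplex.moduleCat_exact_iff]
  rfl

theorem PureProjective.exists_comp_eq_of_isPureEpi_mkQ {R : Type} [Ring R] {M : Type}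
    [AddCommGroup M] [Module R M] {A : Submodule R M} (hA : IsPureEpi R A.mkQ)
    {P₁ P₀ X : ModuleCat R} (hX : PureProjective R X) {d : P₁ ⟶ P₀} {π : P₀ ⟶ X}
    (w : d ≫ π = 0) (hπ : IsColimit (CokernelCofork.ofπ π w))
    (f : P₁ ⟶ ModuleCat.of R A) (v : P₀ ⟶ ModuleCat.of R M)
    (hv : d ≫ v = f ≫ ModuleCat.ofHom A.subtype) :
    ∃ g : P₀ ⟶ ModuleCat.of R A, d ≫ g = f := by
  obtain ⟨h, hh⟩ := CokernelCofork.IsColimit.desc' hπ (v ≫ ModuleCat.ofHom A.mkQ) (by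
    rw [reassoc_of% hv]; ext; simp)
  obtain ⟨k, hk⟩ := hX M (M ⧸ A) A.mkQ hA h.hom
  have hmem (x : P₀) : v x - k (π x) ∈ A := by
    have hx : h (π x) = A.mkQ (v x) := congr($hh x)
    rw [← Submodule.Quotient.mk_eq_zero, ← Submodule.mkQ_apply, map_sub,
      ← LinearMap.comp_apply A.mkQ k, hk]
    exact sub_eq_zero.2 hx.symm
  refine ⟨ModuleCat.ofHom ((v.hom - k ∘ₗ π.hom).codRestrict A hmem), ?_⟩
  ext y
  have hvy : v (d y) = f y := congr($hv y)
  have hwy : π (d y) = 0 := congr($w y)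
  simp [hvy, hwy]

/-- For `𝒳` the class of pure projective modules, the class of `𝒳`-injective modules is
closed under pure submodules. -/
theorem stmt15 (R : Type) [Ring R]
    (M : Type) [AddCommGroup M] [Module R M] (A : Submodule R M)
    (hM : PPInjective R (ModuleCat.of R M))
    (hpure : IsPureEpi R A.mkQ) :
    PPInjective R (ModuleCat.of R (↥A)) := by
  intro X hX
  obtain ⟨P⟩ := (HasProjectiveResolutions.out X).out
  have hPM := (extZero_one_iff P _).1 (hM X hX)
  refine (extZero_one_iff P _).2 fun f hf => ?_
  obtain ⟨v, hv⟩ := hPM (f ≫ ModuleCat.ofHom A.subtype) (by rw [reassoc_of% hf, zero_comp])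
  exact hX.exists_comp_eq_of_isPureEpi_mkQ hpure P.complex_d_comp_π_f_zero
    P.isColimitCokernelCofork f v hv
end
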